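/- Let h be a Lie algebra automorphism of gl^M_∞ and suppose f : V ≃ V is a linear equivalence satisfying f((h φ)(v)) = φ(f(v)) for all φ ∈ gl^M_∞ and v ∈ V. Then the dual map f* : V* → V* maps V_* onto V_* (in particular f*(V_*) ⊆ V_* and (f⁻¹)*(V_*) ⊆ V_*), and h(φ) = f⁻¹ ∘ φ ∘ f for all φ ∈ gl^M_∞. -/

import Mathlib

open TensorProduct

attribute [local instance 100] LieRing.ofAssociativeRing

variable {U W : Type*} [AddCommGroup U] [Module ℂ U] [AddCommGroup W] [Module ℂ W]

/-- The Mackey Lie algebra `gl^M_{U,W}`: all `φ ∈ End ℂ U` whose dual map preserves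
`W̃ = range (B.flip) ⊆ U*`. -/
noncomputable def glMackey (B : U →ₗ[ℂ] W →ₗ[ℂ] ℂ) :
    LieSubalgebra ℂ (Module.End ℂ U) where
  carrier := {φ | ∀ ξ ∈ LinearMap.range B.flip, φ.dualMap ξ ∈ LinearMap.range B.flip}
  add_mem' := by
    intro a b ha hb ξ hξ
    have h : (a + b).dualMap ξ = a.dualMap ξ + b.dualMap ξ := by ext x; simp
    rw [h]
    exact Submodule.add_mem _ (ha ξ hξ) (hb ξ hξ)
  zero_mem' := by
    intro ξ hξ
    have h : (0 : Module.End ℂ U).dualMap ξ = 0 := by ext x; simp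
    rw [h]; exact Submodule.zero_mem _
  smul_mem' := by
    intro c a ha ξ hξ
    have h : (c • a).dualMap ξ = c • a.dualMap ξ := by ext x; simp
    rw [h]
    exact Submodule.smul_mem _ _ (ha ξ hξ)
  lie_mem' := by
    intro a b ha hb ξ hξ
    have h : (⁅a, b⁆ : Module.End ℂ U).dualMap ξ
        = b.dualMap (a.dualMap ξ) - a.dualMap (b.dualMap ξ) := by
      ext x; simp [Module.End.lie_apply]
    rw [h]
    exact Submodule.sub_mem _ (hb _ (ha ξ hξ)) (ha _ (hb ξ hξ))

/-- `V = ℕ →₀ ℂ`, the countable-dimensional standard space. -/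
abbrev Vst : Type := ℕ →₀ ℂ

/-- The standard nondegenerate pairing `B x y = ∑ i, x i * y i` on `V`. -/
noncomputable def Bstd : Vst →ₗ[ℂ] Vst →ₗ[ℂ] ℂ :=
  Finsupp.lsum ℂ fun i => LinearMap.toSpanSingleton ℂ (Vst →ₗ[ℂ] ℂ) (Finsupp.lapply i)

theorem Bstd_apply (x y : Vst) : Bstd x y = x.sum fun i a => a * y i := by
  simp [Bstd, Finsupp.lapply, Finsupp.sum, smul_eq_mul]

section Mackey

variable {B : U →ₗ[ℂ] W →ₗ[ℂ] ℂ}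

theorem LinearMap.dualMap_smulRight (ξ η : Module.Dual ℂ U) (v : U) :
    (ξ.smulRight v).dualMap η = η v • ξ := by
  ext x
  simp [mul_comm]

theorem smulRight_mem_glMackey {ξ : Module.Dual ℂ U} (hξ : ξ ∈ LinearMap.range B.flip)
    (v : U) : ξ.smulRight v ∈ glMackey B := fun η _ => by
  rw [LinearMap.dualMap_smulRight]
  exact Submodule.smul_mem _ _ hξ

/-- Conjugating the rank-one operator `ξ(·) g(e)` by `g` gives `(g* ξ)(·) e`, whose dual sends
any `η ∈ range B.flip` normalised by `η e = 1` to `g* ξ`. -/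
theorem dualMap_mem_range_of_conj_mem (hB : B ≠ 0) (g : U ≃ₗ[ℂ] U)
    (hg : ∀ φ ∈ glMackey B, g.symm.toLinearMap ∘ₗ φ ∘ₗ g.toLinearMap ∈ glMackey B) :
    ∀ ξ ∈ LinearMap.range B.flip, g.toLinearMap.dualMap ξ ∈ LinearMap.range B.flip := by
  intro ξ hξ
  obtain ⟨e, w, hew⟩ : ∃ e w, B e w ≠ 0 := by
    by_contra! h0
    exact hB (LinearMap.ext₂ h0)
  set η := (B e w)⁻¹ • B.flip w
  have hη : η ∈ LinearMap.range B.flip := Submodule.smul_mem _ _ ⟨w, rfl⟩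
  have hηe : η e = 1 := by simp [η, hew]
  have hconj : g.symm.toLinearMap ∘ₗ ξ.smulRight (g e) ∘ₗ g.toLinearMap
      = (g.toLinearMap.dualMap ξ).smulRight e := by
    ext x; simp
  simpa [hconj, LinearMap.dualMap_smulRight, hηe] using
    hg _ (smulRight_mem_glMackey hξ (g e)) η hη

theorem LinearEquiv.map_dualMap_eq_of_forall_mem {S : Submodule ℂ (Module.Dual ℂ U)}
    (g : U ≃ₗ[ℂ] U) (hg : ∀ ξ ∈ S, g.toLinearMap.dualMap ξ ∈ S)
    (hg' : ∀ ξ ∈ S, g.symm.toLinearMap.dualMap ξ ∈ S) :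
    S.map g.toLinearMap.dualMap = S := by
  refine le_antisymm (Submodule.map_le_iff_le_comap.2 hg) fun ξ hξ => ⟨_, hg' ξ hξ, ?_⟩
  ext x
  simp

end Mackey

theorem Bstd_ne_zero : Bstd ≠ 0 := fun h0 => by
  simpa [Bstd_apply] using LinearMap.congr_fun₂ h0 (Finsupp.single 0 1) (Finsupp.single 0 1)

/-- If `h` is a Lie algebra automorphism of `gl^M_∞` and `f : V ≃ V` is an isomorphism
of the twisted module `V^h` with `V` (i.e. `f ((h φ) v) = φ (f v)`), then the dual map
`f*` maps `V_* = range Bstd.flip` onto `V_*` (in particular `f*` and `(f⁻¹)*` preserve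
`V_*`), and `h φ = f⁻¹ ∘ φ ∘ f` for all `φ ∈ gl^M_∞`. -/
theorem stmt_16 (h : ↥(glMackey Bstd) ≃ₗ⁅ℂ⁆ ↥(glMackey Bstd))
    (f : Vst ≃ₗ[ℂ] Vst)
    (hf : ∀ (φ : ↥(glMackey Bstd)) (v : Vst),
      f ((h φ : Module.End ℂ Vst) v) = (φ : Module.End ℂ Vst) (f v)) :
    Submodule.map (LinearMap.dualMap (f : Vst →ₗ[ℂ] Vst)) (LinearMap.range Bstd.flip)
        = LinearMap.range Bstd.flip ∧
    (∀ ξ ∈ LinearMap.range Bstd.flip,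
      LinearMap.dualMap (f : Vst →ₗ[ℂ] Vst) ξ ∈ LinearMap.range Bstd.flip) ∧
    (∀ ξ ∈ LinearMap.range Bstd.flip,
      LinearMap.dualMap (f.symm : Vst →ₗ[ℂ] Vst) ξ ∈ LinearMap.range Bstd.flip) ∧
    (∀ (φ : ↥(glMackey Bstd)) (v : Vst),
      (h φ : Module.End ℂ Vst) v = f.symm ((φ : Module.End ℂ Vst) (f v))) := by
  have h_eq_conj (φ : ↥(glMackey Bstd)) (v : Vst) :
      (h φ : Module.End ℂ Vst) v = f.symm ((φ : Module.End ℂ Vst) (f v)) := by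
    rw [← hf, LinearEquiv.symm_apply_apply]
  have hf_conj_mem (φ) (hφ : φ ∈ glMackey Bstd) :
      f.symm.toLinearMap ∘ₗ φ ∘ₗ f.toLinearMap ∈ glMackey Bstd := by
    convert (h ⟨φ, hφ⟩).2
    exact LinearMap.ext fun v => (h_eq_conj ⟨φ, hφ⟩ v).symm
  have hf_symm_conj_mem (φ) (hφ : φ ∈ glMackey Bstd) :
      f.symm.symm.toLinearMap ∘ₗ φ ∘ₗ f.symm.toLinearMap ∈ glMackey Bstd := by
    convert (h.symm ⟨φ, hφ⟩).2
    refine LinearMap.ext fun v => ?_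
    simpa using hf (h.symm ⟨φ, hφ⟩) (f.symm v)
  have hfwd := dualMap_mem_range_of_conj_mem Bstd_ne_zero f hf_conj_mem
  have hbwd := dualMap_mem_range_of_conj_mem Bstd_ne_zero f.symm hf_symm_conj_mem
  exact ⟨f.map_dualMap_eq_of_forall_mem hfwd hbwd, hfwd, hbwd, h_eq_conj⟩
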